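/- arXiv:2602.07975 — 5 statements merged into one kernel-verified Lean document; each statement's English description precedes it below -/
import Mathlib

section
/- Let G be a connected simple (undirected) graph on N ≥ 2 vertices and let L ∈ ℝ^{N×N} be its Laplacian. Then every nonzero eigenvalue λ of L (i.e., every real λ ≠ 0 such that Lv = λv for some v ≠ 0) satisfies λ ≥ 4/(N(N−1)). -/
/-!
Let `v` be an eigenvector for `λ ≠ 0`. Then `v ⟂ 𝟙`, so with `m, M` the least and largest entries
of `v`, `(v i - m)(M - v i) ≥ 0` summed over `i` gives `‖v‖² ≤ N (M - m)² / 4`. Along a path of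
length at most `N - 1` from an argmin to an argmax, Cauchy–Schwarz gives
`(M - m)² ≤ (N - 1) vᵀLv = (N - 1) λ ‖v‖²`. Combining, `1 ≤ N (N - 1) λ / 4`.
-/

open Finset Matrix

theorem sum_sq_le_card_mul_sq_sub_div_four {ι : Type*} [Fintype ι] {f : ι → ℝ}
    (hf : ∑ i, f i = 0) {m M : ℝ} (hm : ∀ i, m ≤ f i) (hM : ∀ i, f i ≤ M) :
    ∑ i, f i ^ 2 ≤ Fintype.card ι * (M - m) ^ 2 / 4 := by
  have hpoint : ∀ i, f i ^ 2 ≤ (m + M) * f i - m * M := fun i => by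
    nlinarith [mul_nonneg (sub_nonneg.2 (hm i)) (sub_nonneg.2 (hM i))]
  calc ∑ i, f i ^ 2 ≤ ∑ i, ((m + M) * f i - m * M) := sum_le_sum fun i _ => hpoint i
    _ = Fintype.card ι * -(m * M) := by
      rw [sum_sub_distrib, ← mul_sum, hf, sum_const, card_univ, nsmul_eq_mul]; ring
    _ ≤ Fintype.card ι * (M - m) ^ 2 / 4 := by
      rw [mul_div_assoc]
      gcongr
      nlinarith [sq_nonneg (m + M)]

namespace SimpleGraph

variable {V : Type*} {G : SimpleGraph V}

theorem sum_eq_zero_of_lapMatrix_mulVec_eq_smul {R : Type*} [CommRing R] [NoZeroDivisors R]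
    [Fintype V] [DecidableEq V] [DecidableRel G.Adj] {lam : R} (hlam : lam ≠ 0) {v : V → R}
    (hv : G.lapMatrix R *ᵥ v = lam • v) : ∑ i, v i = 0 := by
  have h : lam * ∑ i, v i = (fun _ => 1) ⬝ᵥ (G.lapMatrix R *ᵥ v) := by
    simp [hv, dotProduct, mul_sum]
  rw [dotProduct_mulVec, ← mulVec_transpose, (isSymm_lapMatrix R G).eq,
    lapMatrix_mulVec_const_eq_zero, zero_dotProduct] at h
  exact (mul_eq_zero.1 h).resolve_left hlam

namespace Walk

theorem sum_darts_sub {A : Type*} [AddCommGroup A] (f : V → A) {u w : V} (p : G.Walk u w) :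
    (p.darts.map fun d => f d.fst - f d.snd).sum = f u - f w := by
  induction p with
  | nil => simp
  | cons h p ih => simp [ih]

theorem IsTrail.two_mul_sum_darts_sq_le [Fintype V] [DecidableRel G.Adj] {u w : V}
    {p : G.Walk u w} (hp : p.IsTrail) (f : V → ℝ) :
    2 * (p.darts.map fun d => (f d.fst - f d.snd) ^ 2).sum ≤
      ∑ i, ∑ j, if G.Adj i j then (f i - f j) ^ 2 else 0 := by
  classical
  set D := p.darts.toFinset
  have hD : p.darts.Nodup := hp.edges_nodup.of_map _
  -- A trail traverses each edge in one orientation only.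
  have hdisj : Disjoint D (D.image Dart.symm) := by
    refine Finset.disjoint_left.2 fun d hd hd' => ?_
    obtain ⟨e, he, rfl⟩ := mem_image.1 hd'
    exact e.symm_ne <| List.inj_on_of_nodup_map hp.edges_nodup (List.mem_toFinset.1 hd)
      (List.mem_toFinset.1 he) e.edge_symm
  calc 2 * (p.darts.map fun d => (f d.fst - f d.snd) ^ 2).sum
      = ∑ d ∈ D ∪ D.image Dart.symm, (f d.fst - f d.snd) ^ 2 := by
        rw [sum_union hdisj, sum_image Dart.symm_involutive.injective.injOn,
          ← List.sum_toFinset _ hD, two_mul]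
        exact congrArg _ (sum_congr rfl fun d _ => sub_sq_comm _ _)
    _ = ∑ q ∈ (D ∪ D.image Dart.symm).map ⟨Dart.toProd, Dart.toProd_injective⟩,
          if G.Adj q.1 q.2 then (f q.1 - f q.2) ^ 2 else 0 := by
        rw [sum_map]
        exact sum_congr rfl fun d _ => (if_pos d.adj).symm
    _ ≤ ∑ q : V × V, if G.Adj q.1 q.2 then (f q.1 - f q.2) ^ 2 else 0 :=
        sum_le_sum_of_subset_of_nonneg (subset_univ _) fun _ _ _ => by positivity
    _ = ∑ i, ∑ j, if G.Adj i j then (f i - f j) ^ 2 else 0 := Fintype.sum_prod_type _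

theorem IsTrail.sq_sub_le_length_mul_dotProduct_lapMatrix_mulVec [Fintype V] [DecidableEq V]
    [DecidableRel G.Adj] {u w : V} {p : G.Walk u w} (hp : p.IsTrail) (f : V → ℝ) :
    (f u - f w) ^ 2 ≤ p.length * (f ⬝ᵥ (G.lapMatrix ℝ *ᵥ f)) := by
  classical
  have hD : p.darts.Nodup := hp.edges_nodup.of_map _
  rw [← toLinearMap₂'_apply', lapMatrix_toLinearMap₂']
  calc (f u - f w) ^ 2 = (∑ d ∈ p.darts.toFinset, (f d.fst - f d.snd)) ^ 2 := by
        rw [List.sum_toFinset _ hD, sum_darts_sub]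
    _ ≤ p.length * ∑ d ∈ p.darts.toFinset, (f d.fst - f d.snd) ^ 2 := by
        simpa [List.toFinset_card_of_nodup hD] using
          sq_sum_le_card_mul_sum_sq (s := p.darts.toFinset) (f := fun d => f d.fst - f d.snd)
    _ ≤ p.length * ((∑ i, ∑ j, if G.Adj i j then (f i - f j) ^ 2 else 0) / 2) := by
        rw [List.sum_toFinset _ hD]
        gcongr
        linarith [hp.two_mul_sum_darts_sq_le f]

end Walk

theorem Connected.sq_sub_le_mul_dotProduct_lapMatrix_mulVec [Fintype V] [DecidableEq V]
    [DecidableRel G.Adj] (hG : G.Connected) (f : V → ℝ) (u w : V) :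
    (f u - f w) ^ 2 ≤ (Fintype.card V - 1) * (f ⬝ᵥ (G.lapMatrix ℝ *ᵥ f)) := by
  obtain ⟨p, hp⟩ := hG.preconnected.exists_isPath u w
  have hlen : (p.length : ℝ) ≤ Fintype.card V - 1 :=
    le_sub_iff_add_le.2 (by exact_mod_cast hp.length_lt)
  calc (f u - f w) ^ 2 ≤ p.length * (f ⬝ᵥ (G.lapMatrix ℝ *ᵥ f)) :=
        hp.isTrail.sq_sub_le_length_mul_dotProduct_lapMatrix_mulVec f
    _ ≤ (Fintype.card V - 1) * (f ⬝ᵥ (G.lapMatrix ℝ *ᵥ f)) := by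
        gcongr
        simpa using (posSemidef_lapMatrix ℝ G).dotProduct_mulVec_nonneg f

end SimpleGraph

/-- Every nonzero eigenvalue `lam` of the Laplacian of a connected simple
graph on `N ≥ 2` vertices satisfies `lam ≥ 4 / (N * (N - 1))`. -/
theorem laplacian_nonzero_eigenvalue_lower_bound
    (N : ℕ) (hN : 2 ≤ N) (G : SimpleGraph (Fin N)) [DecidableRel G.Adj]
    (hconn : G.Connected) (L : Matrix (Fin N) (Fin N) ℝ) (hL : L = G.lapMatrix ℝ)
    (lam : ℝ) (hlam : lam ≠ 0)
    (heig : ∃ v : Fin N → ℝ, v ≠ 0 ∧ L.mulVec v = lam • v) :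
    4 / ((N : ℝ) * ((N : ℝ) - 1)) ≤ lam := by
  subst hL
  obtain ⟨v, hv, hev⟩ := heig
  have := hconn.nonempty
  obtain ⟨a, -, ha⟩ := exists_min_image univ v univ_nonempty
  obtain ⟨b, -, hb⟩ := exists_max_image univ v univ_nonempty
  have hP : 0 < v ⬝ᵥ v := by simpa using dotProduct_self_star_pos_iff.2 hv
  have hquad : v ⬝ᵥ (G.lapMatrix ℝ *ᵥ v) = lam * (v ⬝ᵥ v) := by
    rw [hev, dotProduct_smul, smul_eq_mul]
  have hbound : v ⬝ᵥ v ≤ N * (N - 1) / 4 * lam * (v ⬝ᵥ v) := calc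
    v ⬝ᵥ v = ∑ i, v i ^ 2 := by simp [dotProduct, sq]
    _ ≤ N * (v b - v a) ^ 2 / 4 := by
        simpa using sum_sq_le_card_mul_sq_sub_div_four
          (G.sum_eq_zero_of_lapMatrix_mulVec_eq_smul hlam hev) (fun i => ha i (mem_univ i))
          (fun i => hb i (mem_univ i))
    _ ≤ N * ((N - 1) * (v ⬝ᵥ (G.lapMatrix ℝ *ᵥ v))) / 4 := by
        gcongr
        simpa using hconn.sq_sub_le_mul_dotProduct_lapMatrix_mulVec v b a
    _ = N * (N - 1) / 4 * lam * (v ⬝ᵥ v) := by rw [hquad]; ring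
  have hlam_ge : 1 ≤ N * (N - 1) / 4 * lam := le_of_mul_le_mul_right (by simpa using hbound) hP
  have hNR : (2 : ℝ) ≤ N := by exact_mod_cast hN
  rw [div_le_iff₀ (by nlinarith)]
  linarith
end

section
/- Let G be a simple (undirected) graph on N ≥ 1 vertices with Laplacian L ∈ ℝ^{N×N}, and let Δ ∈ ℝ^{N×N} be a diagonal matrix all of whose diagonal entries lie in {0,1}. Set H = L + Δ. Then every nonzero eigenvalue λ of H (i.e., every real λ ≠ 0 such that Hv = λv for some v ≠ 0) satisfies λ ≥ 4/(N(N²−N+4)). -/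
/-!
Restrict an eigenvector to the connected component `C` (with `n` vertices) of a vertex where it
does not vanish: the restriction `w` is again an eigenvector, and
`λ ‖w‖² = E(w) + ∑ Δᵤ wᵤ²`, where `E(w)` sums `(w_a - w_b)²` over the edges `ab`. Cauchy–Schwarz
along a path gives `(w_a - w_b)² ≤ (n - 1) E(w)` for `a, b ∈ C`.

If some `j ∈ C` has `Δⱼ = 1`, then `E(w) + wⱼ² ≤ λ ‖w‖²`, and the term `wⱼ²` acts as one more edge,
from `j` to a vertex where `w` vanishes: `wᵤ² ≤ n λ ‖w‖²` for `u ≠ j`, so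
`‖w‖² ≤ (1 + n (n - 1)) λ ‖w‖²`. Otherwise `w` is a Laplacian eigenvector with `λ ≠ 0`, hence
`∑_C wᵤ = 0`; each `wᵤ` then has a partner `w_k` of opposite sign, so
`wᵤ² ≤ (wᵤ - w_k)² ≤ (n - 1) λ ‖w‖²`. Either way `λ ≥ 1 / (n² - n + 1)`, and
`4 (N² - N + 1) ≤ N (N² - N + 4)` is `(N - 1) (N - 2)² ≥ 0`.
-/

open Finset Matrix

lemma add_sq_le_add_one_mul {a b L S : ℝ} (hL : 0 ≤ L) (hS : 0 ≤ S) (h : a ^ 2 ≤ L * S) :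
    (a + b) ^ 2 ≤ (L + 1) * (S + b ^ 2) := by
  rcases hL.eq_or_lt with rfl | hL
  · have ha : a = 0 := by nlinarith [sq_nonneg a]
    subst ha
    nlinarith
  · have : 2 * a * b ≤ S + L * b ^ 2 := by nlinarith [sq_nonneg (a - L * b)]
    nlinarith

section SupportedVector

variable {ι : Type*} {C : Finset ι} {w : ι → ℝ}

lemma dotProduct_self_eq_sum_sq_of_support_subset [Fintype ι] (hwC : ∀ u ∉ C, w u = 0) :
    w ⬝ᵥ w = ∑ u ∈ C, w u ^ 2 := by
  rw [dotProduct, ← sum_subset (subset_univ C) fun u _ hu => by simp [hwC u hu]]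
  simp only [sq]

lemma sum_sq_pos_of_support_subset (hwC : ∀ u ∉ C, w u = 0) (hw0 : w ≠ 0) :
    0 < ∑ u ∈ C, w u ^ 2 := by
  obtain ⟨u, hu⟩ := Function.ne_iff.mp hw0
  have huC : u ∈ C := by by_contra h; exact hu (hwC u h)
  exact (pow_two_pos_of_ne_zero hu).trans_le (single_le_sum (fun i _ => sq_nonneg (w i)) huC)

lemma exists_mul_nonpos_of_sum_eq_zero (hsum : ∑ u ∈ C, w u = 0) {u : ι} (hu : u ∈ C) :
    ∃ k ∈ C, w u * w k ≤ 0 := by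
  by_contra! h
  have : 0 < ∑ k ∈ C, w u * w k := sum_pos (fun k hk => h k hk) ⟨u, hu⟩
  rw [← mul_sum, hsum, mul_zero] at this
  exact this.false

end SupportedVector

lemma Matrix.mulVec_indicator {n R : Type*} [Fintype n] [NonUnitalNonAssocSemiring R]
    (M : Matrix n n R) {s : Set n} (hM : ∀ i j, M i j ≠ 0 → (i ∈ s ↔ j ∈ s)) (v : n → R) :
    M *ᵥ s.indicator v = s.indicator (M *ᵥ v) := by
  ext i
  by_cases hi : i ∈ s
  · rw [Set.indicator_of_mem hi, mulVec, mulVec, dotProduct, dotProduct]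
    refine sum_congr rfl fun j _ => ?_
    by_cases hj : j ∈ s
    · rw [Set.indicator_of_mem hj]
    · rw [not_imp_comm.mp (hM i j) fun h => hj (h.mp hi), zero_mul, zero_mul]
  · rw [Set.indicator_of_notMem hi, mulVec, dotProduct]
    refine sum_eq_zero fun j _ => ?_
    by_cases hj : j ∈ s
    · rw [not_imp_comm.mp (hM i j) fun h => hi (h.mpr hj), zero_mul]
    · rw [Set.indicator_of_notMem hj, mul_zero]

namespace SimpleGraph

variable {V : Type*} {G : SimpleGraph V}

def sqDiff (x : V → ℝ) : Sym2 V → ℝ :=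
  Sym2.lift ⟨fun a b => (x a - x b) ^ 2, fun _ _ => by ring⟩

@[simp]
lemma sqDiff_mk (x : V → ℝ) (a b : V) : sqDiff x s(a, b) = (x a - x b) ^ 2 := rfl

lemma sqDiff_nonneg (x : V → ℝ) (e : Sym2 V) : 0 ≤ sqDiff x e :=
  e.ind fun _ _ => sq_nonneg _

lemma Walk.sq_sub_le_length_mul_sum_sqDiff (x : V → ℝ) {a b : V} (p : G.Walk a b) :
    (x a - x b) ^ 2 ≤ p.length * (p.edges.map (sqDiff x)).sum := by
  induction p with
  | nil => simp
  | @cons a c b _ q ih =>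
    have hq : 0 ≤ (q.edges.map (sqDiff x)).sum :=
      List.sum_nonneg (by simpa using fun e _ => sqDiff_nonneg x e)
    have := add_sq_le_add_one_mul (b := x a - x c) (by positivity) hq ih
    simp only [Walk.length_cons, Walk.edges_cons, List.map_cons, List.sum_cons, sqDiff_mk,
      Nat.cast_succ]
    linarith [show x c - x b + (x a - x c) = x a - x b by ring]

lemma Walk.IsPath.length_lt_card {a b : V} {p : G.Walk a b} (hp : p.IsPath) {C : Finset V}
    (hC : ∀ y ∈ p.support, y ∈ C) : p.length < #C := by
  classical
  have := card_le_card (s := p.support.toFinset) fun y hy => hC y (List.mem_toFinset.mp hy)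
  rw [List.toFinset_card_of_nodup hp.support_nodup, Walk.length_support] at this
  omega

variable [Fintype V] [DecidableRel G.Adj]

def dirichletEnergy (G : SimpleGraph V) [DecidableRel G.Adj] (x : V → ℝ) : ℝ :=
  ∑ e ∈ G.edgeFinset, sqDiff x e

lemma Walk.IsTrail.sum_sqDiff_le_dirichletEnergy (x : V → ℝ) {a b : V} {p : G.Walk a b}
    (hp : p.IsTrail) : (p.edges.map (sqDiff x)).sum ≤ G.dirichletEnergy x := by
  classical
  rw [← List.sum_toFinset _ hp.edges_nodup, dirichletEnergy]
  refine sum_le_sum_of_subset_of_nonneg (fun e he => ?_) fun e _ _ => sqDiff_nonneg x e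
  exact mem_edgeFinset.mpr (p.edges_subset_edgeSet (List.mem_toFinset.mp he))

lemma sum_dart_edge_eq_two_nsmul_sum_edgeFinset {M : Type*} [AddCommMonoid M] (g : Sym2 V → M) :
    ∑ d : G.Dart, g d.edge = 2 • ∑ e ∈ G.edgeFinset, g e := by
  classical
  rw [← sum_fiberwise_of_maps_to (g := Dart.edge) (t := G.edgeFinset) (by simp), smul_sum]
  refine sum_congr rfl fun e he => ?_
  rw [sum_congr rfl fun d hd => by rw [(mem_filter.mp hd).2], sum_const,
    dart_edge_fiber_card G e (mem_edgeFinset.mp he)]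

lemma sum_dart_eq_sum_sum_ite_adj {M : Type*} [AddCommMonoid M] (f : V → V → M) :
    ∑ d : G.Dart, f d.fst d.snd = ∑ i, ∑ j, if G.Adj i j then f i j else 0 := by
  classical
  rw [← sum_product' (f := fun i j => if G.Adj i j then f i j else 0), ← sum_filter]
  exact sum_bij' (fun d _ => d.toProd) (fun p hp => ⟨p, (mem_filter.mp hp).2⟩)
    (by simp) (by simp) (by simp) (by simp) (by simp)

lemma sq_sub_le_card_sub_one_mul_dirichletEnergy (x : V → ℝ) {C : Finset V} {a b : V}
    (hC : ∀ y, G.Reachable a y → y ∈ C) (hab : G.Reachable a b) :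
    (x a - x b) ^ 2 ≤ (#C - 1 : ℝ) * G.dirichletEnergy x := by
  classical
  obtain ⟨p⟩ := hab
  let q := p.toPath
  have hlen : (q.1.length : ℝ) ≤ #C - 1 := by
    have := q.2.length_lt_card fun y hy => hC y ⟨q.1.takeUntil y hy⟩
    rw [le_sub_iff_add_le]
    exact_mod_cast this
  calc (x a - x b) ^ 2 ≤ q.1.length * (q.1.edges.map (sqDiff x)).sum :=
        q.1.sq_sub_le_length_mul_sum_sqDiff x
    _ ≤ (#C - 1 : ℝ) * G.dirichletEnergy x :=
        mul_le_mul hlen (q.2.isTrail.sum_sqDiff_le_dirichletEnergy x)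
          (List.sum_nonneg (by simpa using fun e _ => sqDiff_nonneg x e))
          (by linarith [Nat.cast_nonneg (α := ℝ) q.1.length])

lemma sq_sub_le_of_mem_component {C : Finset V} {u₀ : V} (hC : ∀ u, u ∈ C ↔ G.Reachable u₀ u)
    (x : V → ℝ) {a b : V} (ha : a ∈ C) (hb : b ∈ C) :
    (x a - x b) ^ 2 ≤ (#C - 1 : ℝ) * G.dirichletEnergy x :=
  sq_sub_le_card_sub_one_mul_dirichletEnergy x (fun y hy => (hC y).2 (((hC a).1 ha).trans hy))
    (((hC a).1 ha).symm.trans ((hC b).1 hb))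

variable [DecidableEq V]

lemma dotProduct_lapMatrix_mulVec (x : V → ℝ) :
    x ⬝ᵥ (G.lapMatrix ℝ *ᵥ x) = G.dirichletEnergy x := by
  have h := sum_dart_edge_eq_two_nsmul_sum_edgeFinset (G := G) (sqDiff x)
  rw [← toLinearMap₂'_apply', lapMatrix_toLinearMap₂', ← sum_dart_eq_sum_sum_ite_adj,
    dirichletEnergy]
  simp only [Dart.edge, sqDiff_mk] at h ⊢
  rw [h, two_smul]
  ring

lemma sum_lapMatrix_mulVec (x : V → ℝ) : ∑ i, (G.lapMatrix ℝ *ᵥ x) i = 0 := by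
  rw [← one_dotProduct, dotProduct_mulVec, ← mulVec_transpose, (G.isSymm_lapMatrix ℝ).eq]
  exact (congrArg (· ⬝ᵥ x) G.lapMatrix_mulVec_const_eq_zero).trans (zero_dotProduct x)

lemma reachable_of_lapMatrix_add_diagonal_apply_ne_zero {Δ : V → ℝ} {i j : V}
    (h : (G.lapMatrix ℝ + diagonal Δ) i j ≠ 0) : G.Reachable i j := by
  by_contra hij
  have hne : i ≠ j := fun h' => hij (h' ▸ Reachable.refl i)
  have hadj : ¬ G.Adj i j := fun h' => hij h'.reachable
  exact h (by simp [lapMatrix, degMatrix, hne, hadj])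

lemma lapMatrix_add_diagonal_mulVec_indicator_reachable (Δ : V → ℝ) (u₀ : V) (v : V → ℝ) :
    (G.lapMatrix ℝ + diagonal Δ) *ᵥ {u | G.Reachable u₀ u}.indicator v =
      {u | G.Reachable u₀ u}.indicator ((G.lapMatrix ℝ + diagonal Δ) *ᵥ v) := by
  refine mulVec_indicator _ (fun i j hij => ?_) v
  have hij := reachable_of_lapMatrix_add_diagonal_apply_ne_zero hij
  exact ⟨fun h => h.trans hij, fun h => h.trans hij.symm⟩

variable {C : Finset V} {u₀ : V} {w : V → ℝ} {lam : ℝ}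

lemma one_le_mul_card_mul_card_sub_one_of_lapMatrix_mulVec_eq_smul
    (hC : ∀ u, u ∈ C ↔ G.Reachable u₀ u) (hwC : ∀ u ∉ C, w u = 0) (hw0 : w ≠ 0)
    (hw : G.lapMatrix ℝ *ᵥ w = lam • w) (hlam : lam ≠ 0) :
    1 ≤ lam * (#C * (#C - 1)) := by
  set S := ∑ u ∈ C, w u ^ 2
  have hS : 0 < S := sum_sq_pos_of_support_subset hwC hw0
  have hE : G.dirichletEnergy w = lam * S := by
    rw [← dotProduct_lapMatrix_mulVec, hw, dotProduct_smul,
      dotProduct_self_eq_sum_sq_of_support_subset hwC, smul_eq_mul]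
  have hsum : ∑ u ∈ C, w u = 0 := by
    have h := sum_lapMatrix_mulVec (G := G) w
    rw [hw, ← sum_subset (subset_univ C) fun u _ hu => by simp [hwC u hu]] at h
    simp only [Pi.smul_apply, smul_eq_mul, ← mul_sum] at h
    exact (mul_eq_zero.mp h).resolve_left hlam
  have hpoint : ∀ u ∈ C, w u ^ 2 ≤ (#C - 1 : ℝ) * (lam * S) := by
    intro u hu
    obtain ⟨k, hk, hwk⟩ := exists_mul_nonpos_of_sum_eq_zero hsum hu
    calc w u ^ 2 ≤ (w u - w k) ^ 2 := by nlinarith [sq_nonneg (w k)]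
      _ ≤ _ := hE ▸ sq_sub_le_of_mem_component hC w hu hk
  have hSle : S ≤ #C * ((#C - 1 : ℝ) * (lam * S)) := by
    simpa using sum_le_card_nsmul C _ _ hpoint
  exact le_of_mul_le_mul_right (by linarith) hS

lemma one_le_mul_card_sq_sub_card_add_one_of_grounded (hC : ∀ u, u ∈ C ↔ G.Reachable u₀ u)
    (hwC : ∀ u ∉ C, w u = 0) (hw0 : w ≠ 0) {Δ : V → ℝ} (hΔ : ∀ i, 0 ≤ Δ i)
    (hw : (G.lapMatrix ℝ + diagonal Δ) *ᵥ w = lam • w) {j : V} (hj : j ∈ C) (hΔj : 1 ≤ Δ j) :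
    1 ≤ lam * (#C ^ 2 - #C + 1) := by
  have hR : G.dirichletEnergy w + ∑ u, Δ u * w u ^ 2 = lam * ∑ u ∈ C, w u ^ 2 := by
    have h := congrArg (w ⬝ᵥ ·) hw
    simp only [add_mulVec, dotProduct_add, dotProduct_lapMatrix_mulVec, dotProduct_smul,
      dotProduct_self_eq_sum_sq_of_support_subset hwC, smul_eq_mul] at h
    rw [← h, dotProduct]
    simp only [mulVec_diagonal, sq, mul_left_comm]
  set S := ∑ u ∈ C, w u ^ 2
  set E := G.dirichletEnergy w
  have hS : 0 < S := sum_sq_pos_of_support_subset hwC hw0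
  have hE : 0 ≤ E := sum_nonneg fun e _ => sqDiff_nonneg w e
  have hC1 : (1 : ℝ) ≤ #C := by exact_mod_cast card_pos.mpr ⟨j, hj⟩
  have hgrounded : E + w j ^ 2 ≤ lam * S := by
    have : w j ^ 2 ≤ ∑ u, Δ u * w u ^ 2 :=
      (le_mul_of_one_le_left (sq_nonneg _) hΔj).trans
        (single_le_sum (f := fun u => Δ u * w u ^ 2)
          (fun u _ => mul_nonneg (hΔ u) (sq_nonneg _)) (mem_univ j))
    linarith
  have hpoint : ∀ u ∈ C.erase j, w u ^ 2 ≤ #C * (lam * S) := by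
    intro u hu
    have h := add_sq_le_add_one_mul (b := w j) (by linarith) hE
      (sq_sub_le_of_mem_component hC w (mem_of_mem_erase hu) hj)
    rw [sub_add_cancel, sub_add_cancel] at h
    exact h.trans (mul_le_mul_of_nonneg_left hgrounded (Nat.cast_nonneg _))
  have hSle : S ≤ lam * S + (#C - 1 : ℝ) * (#C * (lam * S)) := by
    have h := sum_le_card_nsmul (C.erase j) _ _ hpoint
    rw [card_erase_of_mem hj, nsmul_eq_mul, Nat.cast_sub (card_pos.mpr ⟨j, hj⟩), Nat.cast_one] at h
    have hsplit := add_sum_erase C (fun u => w u ^ 2) hj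
    linarith
  exact le_of_mul_le_mul_right (by linarith) hS

theorem one_le_mul_card_sq_sub_card_add_one (hC : ∀ u, u ∈ C ↔ G.Reachable u₀ u)
    (hwC : ∀ u ∉ C, w u = 0) (hw0 : w ≠ 0) {Δ : V → ℝ} (hΔ : ∀ i, Δ i = 0 ∨ 1 ≤ Δ i)
    (hw : (G.lapMatrix ℝ + diagonal Δ) *ᵥ w = lam • w) (hlam : lam ≠ 0) :
    1 ≤ lam * (#C ^ 2 - #C + 1) := by
  by_cases hgrounded : ∃ j ∈ C, Δ j ≠ 0
  · obtain ⟨j, hj, hΔj⟩ := hgrounded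
    exact one_le_mul_card_sq_sub_card_add_one_of_grounded hC hwC hw0
      (fun i => (hΔ i).elim ge_of_eq zero_le_one.trans) hw hj ((hΔ j).resolve_left hΔj)
  · push Not at hgrounded
    have hdiag : diagonal Δ *ᵥ w = 0 := by
      ext u
      rw [mulVec_diagonal, Pi.zero_apply]
      by_cases hu : u ∈ C
      · rw [hgrounded u hu, zero_mul]
      · rw [hwC u hu, mul_zero]
    rw [add_mulVec, hdiag, add_zero] at hw
    have h := one_le_mul_card_mul_card_sub_one_of_lapMatrix_mulVec_eq_smul hC hwC hw0 hw hlam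
    have hC1 : (1 : ℝ) ≤ #C := by exact_mod_cast card_pos.mpr ⟨u₀, (hC u₀).2 .rfl⟩
    have hlam_pos : 0 < lam := pos_of_mul_pos_left (one_pos.trans_le h) (by nlinarith)
    nlinarith

end SimpleGraph

lemma four_div_le_one_div_sq_sub_add_one {n N : ℝ} (hn : 1 ≤ n) (hnN : n ≤ N) :
    4 / (N * (N ^ 2 - N + 4)) ≤ 1 / (n ^ 2 - n + 1) := by
  rw [div_le_div_iff₀ (by nlinarith) (by nlinarith)]
  nlinarith [mul_nonneg (sub_nonneg.mpr (hn.trans hnN)) (sq_nonneg (N - 2)),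
    mul_nonneg (sub_nonneg.mpr hnN) (by linarith : (0 : ℝ) ≤ N + n - 1)]

theorem leader_follower_matrix_nonzero_eigenvalue_lower_bound_general
    (N : ℕ) (G : SimpleGraph (Fin N)) [DecidableRel G.Adj]
    (Δ : Fin N → ℝ) (hΔ : ∀ i, Δ i = 0 ∨ Δ i = 1)
    (H : Matrix (Fin N) (Fin N) ℝ) (hH : H = G.lapMatrix ℝ + Matrix.diagonal Δ)
    (lam : ℝ) (hlam : lam ≠ 0)
    (heig : ∃ v : Fin N → ℝ, v ≠ 0 ∧ H.mulVec v = lam • v) :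
    4 / ((N : ℝ) * ((N : ℝ) ^ 2 - (N : ℝ) + 4)) ≤ lam := by
  classical
  obtain ⟨v, hv0, hv⟩ := heig
  obtain ⟨u₀, hu₀⟩ := Function.ne_iff.mp hv0
  let C : Finset (Fin N) := {u | G.Reachable u₀ u}
  have hC : ∀ u, u ∈ C ↔ G.Reachable u₀ u := by simp [C]
  let w := {u | G.Reachable u₀ u}.indicator v
  have hw : (G.lapMatrix ℝ + diagonal Δ) *ᵥ w = lam • w := by
    rw [G.lapMatrix_add_diagonal_mulVec_indicator_reachable, ← hH, hv]
    exact Set.indicator_const_smul _ lam v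
  have hwC : ∀ u ∉ C, w u = 0 := fun u hu => Set.indicator_of_notMem (by simpa [hC] using hu) v
  have hw0 : w ≠ 0 := Function.ne_iff.mpr ⟨u₀, by simpa [w] using hu₀⟩
  have hbound := G.one_le_mul_card_sq_sub_card_add_one hC hwC hw0
    (fun i => (hΔ i).imp id ge_of_eq) hw hlam
  have hn : (1 : ℝ) ≤ #C := by exact_mod_cast card_pos.mpr ⟨u₀, (hC u₀).2 .rfl⟩
  have hnN : (#C : ℝ) ≤ N := by exact_mod_cast (card_le_univ C).trans_eq (Fintype.card_fin N)
  calc 4 / ((N : ℝ) * ((N : ℝ) ^ 2 - (N : ℝ) + 4)) ≤ 1 / ((#C : ℝ) ^ 2 - #C + 1) :=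
        four_div_le_one_div_sq_sub_add_one hn hnN
    _ ≤ lam := by
        rw [div_le_iff₀ (by nlinarith)]
        linarith

/-- For a simple graph on `N ≥ 1` vertices with Laplacian `L` and a
`(0,1)`-diagonal matrix `Δ`, every nonzero eigenvalue `lam` of `H = L + Δ` satisfies
`lam ≥ 4 / (N * (N² - N + 4))`. -/
theorem leader_follower_matrix_nonzero_eigenvalue_lower_bound
    (N : ℕ) (hN : 1 ≤ N) (G : SimpleGraph (Fin N)) [DecidableRel G.Adj]
    (Δ : Fin N → ℝ) (hΔ : ∀ i, Δ i = 0 ∨ Δ i = 1)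
    (H : Matrix (Fin N) (Fin N) ℝ) (hH : H = G.lapMatrix ℝ + Matrix.diagonal Δ)
    (lam : ℝ) (hlam : lam ≠ 0)
    (heig : ∃ v : Fin N → ℝ, v ≠ 0 ∧ H.mulVec v = lam • v) :
    4 / ((N : ℝ) * ((N : ℝ) ^ 2 - (N : ℝ) + 4)) ≤ lam :=
  leader_follower_matrix_nonzero_eigenvalue_lower_bound_general N G Δ hΔ H hH lam hlam heig
end

section
/- Let H_1, …, H_q ∈ ℝ^{N×N} be symmetric positive semidefinite matrices such that the sum H_1 + ⋯ + H_q is positive definite. For each r let P_r ∈ ℝ^{N×N} be the orthogonal projection onto ker(H_r). Then the product P_q P_{q−1} ⋯ P_1 has operator norm strictly less than 1: ‖P_q ⋯ P_1‖ < 1. -/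
/-!
An orthogonal projection `P` satisfies `‖v‖² = ‖P v‖² + ‖v - P v‖²`, so it does not increase norms
and preserves the norm of `v` only if it fixes `v`. Hence the product of the `P r` preserves the
norm of `v` only if every `P r` fixes `v`; then `H r v = H r (P r v) = 0` for all `r`, so
`(∑ H r) v = 0` and `v = 0`. Thus the product strictly shrinks every nonzero vector, and since
the operator norm is attained on the compact unit sphere, it is `< 1`.
-/

open Matrix

/-- The operator norm of a square real matrix induced by the Euclidean vector norm. -/
noncomputable def opNorm {k : Type*} [Fintype k] [DecidableEq k] (M : Matrix k k ℝ) : ℝ :=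
  ‖Matrix.toEuclideanCLM (𝕜 := ℝ) M‖

/-- The product `f (b-1) * f (b-2) * ⋯ * f a` (the identity if `b ≤ a`):
later factors multiply on the left. -/
def descProd {R : Type*} [Monoid R] (f : ℕ → R) (a b : ℕ) : R :=
  ((List.range (b - a)).map (fun i => f (b - 1 - i))).prod

section descProd

variable {R S : Type*} [Monoid R] [Monoid S]

@[simp]
lemma descProd_zero_zero (f : ℕ → R) : descProd f 0 0 = 1 := by
  simp [descProd]

lemma descProd_zero_succ (f : ℕ → R) (q : ℕ) :
    descProd f 0 (q + 1) = f q * descProd f 0 q := by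
  simp only [descProd, Nat.sub_zero, List.range_succ_eq_map, List.map_cons, List.prod_cons,
    List.map_map, Nat.add_sub_cancel]
  congr 3
  funext i
  simp only [Function.comp_apply]
  congr 1
  omega

lemma map_descProd {F : Type*} [FunLike F R S] [MonoidHomClass F R S] (φ : F) (f : ℕ → R)
    (a b : ℕ) : φ (descProd f a b) = descProd (φ ∘ f) a b := by
  simp [descProd, map_list_prod, List.map_map, Function.comp_def]

end descProd

section Contraction

variable {𝕜 E : Type*} [NormedField 𝕜] [SeminormedAddCommGroup E] [NormedSpace 𝕜 E]

lemma descProd_apply_eq_self (f : ℕ → E →L[𝕜] E) {q : ℕ} {v : E}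
    (hv : ∀ r < q, f r v = v) : descProd f 0 q v = v := by
  induction q with
  | zero => simp
  | succ q ih =>
    rw [descProd_zero_succ, mul_apply_eq_comp, ih fun r hr => hv r (by omega),
      hv q q.lt_succ_self]

lemma norm_descProd_apply_le (f : ℕ → E →L[𝕜] E) {q : ℕ} (hf : ∀ r < q, ∀ v, ‖f r v‖ ≤ ‖v‖)
    (v : E) : ‖descProd f 0 q v‖ ≤ ‖v‖ := by
  induction q with
  | zero => simp
  | succ q ih =>
    rw [descProd_zero_succ, mul_apply_eq_comp]
    exact (hf q q.lt_succ_self _).trans (ih fun r hr => hf r (by omega))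

lemma apply_eq_self_of_norm_descProd_apply_eq (f : ℕ → E →L[𝕜] E) {q : ℕ}
    (hf : ∀ r < q, ∀ v, ‖f r v‖ ≤ ‖v‖) (hf_eq : ∀ r < q, ∀ v, ‖f r v‖ = ‖v‖ → f r v = v)
    {v : E} (hv : ‖descProd f 0 q v‖ = ‖v‖) : ∀ r < q, f r v = v := by
  induction q with
  | zero => simp
  | succ q ih =>
    have hf' : ∀ r < q, ∀ v, ‖f r v‖ ≤ ‖v‖ := fun r hr => hf r (by omega)
    rw [descProd_zero_succ, mul_apply_eq_comp] at hv
    have hw : ‖descProd f 0 q v‖ = ‖v‖ :=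
      (norm_descProd_apply_le f hf' v).antisymm (hv ▸ hf q q.lt_succ_self _)
    have hfix : ∀ r < q, f r v = v := ih hf' (fun r hr => hf_eq r (by omega)) hw
    rw [descProd_apply_eq_self f hfix] at hv
    intro r hr
    rcases Nat.lt_succ_iff_lt_or_eq.mp hr with hr | rfl
    · exact hfix r hr
    · exact hf_eq r hr v hv

end Contraction

namespace IsStarProjection

variable {𝕜 E : Type*} [RCLike 𝕜] [NormedAddCommGroup E] [InnerProductSpace 𝕜 E] [CompleteSpace E]
  {p : E →L[𝕜] E}

lemma norm_apply_le (hp : IsStarProjection p) (v : E) : ‖p v‖ ≤ ‖v‖ := by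
  obtain ⟨K, _, rfl⟩ := isStarProjection_iff_eq_starProjection.mp hp
  exact K.norm_starProjection_apply_le v

lemma apply_eq_self_of_norm_apply_eq (hp : IsStarProjection p) {v : E} (hv : ‖p v‖ = ‖v‖) :
    p v = v := by
  obtain ⟨K, _, rfl⟩ := isStarProjection_iff_eq_starProjection.mp hp
  exact K.starProjection_eq_self_iff.mpr ((K.mem_iff_norm_starProjection v).mpr hv)

end IsStarProjection

lemma ContinuousLinearMap.opNorm_lt_one_of_norm_apply_lt {E F : Type*} [NormedAddCommGroup E]
    [NormedSpace ℝ E] [FiniteDimensional ℝ E] [SeminormedAddCommGroup F] [NormedSpace ℝ F]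
    (T : E →L[ℝ] F) (hT : ∀ v ≠ 0, ‖T v‖ < ‖v‖) : ‖T‖ < 1 := by
  rcases subsingleton_or_nontrivial E with _ | _
  · simp [Subsingleton.elim T 0]
  obtain ⟨x₀, hx₀, hmax⟩ := (isCompact_sphere (0 : E) 1).exists_isMaxOn
    (NormedSpace.sphere_nonempty.mpr zero_le_one)
    (by fun_prop : Continuous fun x => ‖T x‖).continuousOn
  rw [mem_sphere_zero_iff_norm] at hx₀
  calc ‖T‖ ≤ ‖T x₀‖ := T.opNorm_le_of_unit_norm (norm_nonneg _) fun x hx =>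
        hmax (mem_sphere_zero_iff_norm.mpr hx)
    _ < 1 := hx₀ ▸ hT x₀ (by rintro rfl; simp at hx₀)

lemma Matrix.isStarProjection_toEuclideanCLM {n : Type*} [Fintype n] [DecidableEq n]
    {P : Matrix n n ℝ} (hsymm : Pᵀ = P) (hidem : P * P = P) :
    IsStarProjection (toEuclideanCLM (𝕜 := ℝ) P) where
  isIdempotentElem := by
    rw [IsIdempotentElem, ← map_mul, hidem]
  isSelfAdjoint := by
    rw [IsSelfAdjoint, ← map_star, star_eq_conjTranspose, conjTranspose_eq_transpose_of_trivial,
      hsymm]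

lemma Matrix.eq_zero_of_forall_mulVec_eq_self {n : Type*} [Fintype n] {q : ℕ}
    (H P : ℕ → Matrix n n ℝ) (hsum : (∑ r ∈ Finset.range q, H r).PosDef)
    (hPrange : ∀ r < q, ∀ x, H r *ᵥ (P r *ᵥ x) = 0) {x : n → ℝ}
    (hx : ∀ r < q, P r *ᵥ x = x) : x = 0 := by
  have hker : (∑ r ∈ Finset.range q, H r) *ᵥ x = 0 := by
    rw [sum_mulVec]
    refine Finset.sum_eq_zero fun r hr => ?_
    rw [← hx r (Finset.mem_range.mp hr)]
    exact hPrange r (Finset.mem_range.mp hr) x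
  by_contra hx0
  simpa [hker] using hsum.dotProduct_mulVec_pos hx0

theorem opNorm_prod_proj_ker_lt_one_general
    (N q : ℕ) (H P : ℕ → Matrix (Fin N) (Fin N) ℝ)
    (hsum : (∑ r ∈ Finset.range q, H r).PosDef)
    (hPsymm : ∀ r < q, (P r)ᵀ = P r)
    (hPidem : ∀ r < q, P r * P r = P r)
    (hPrange : ∀ r < q, ∀ x : Fin N → ℝ, (H r).mulVec ((P r).mulVec x) = 0) :
    opNorm (descProd P 0 q) < 1 := by
  set T := fun r => toEuclideanCLM (𝕜 := ℝ) (P r)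
  have hT : ∀ r < q, IsStarProjection (T r) := fun r hr =>
    isStarProjection_toEuclideanCLM (hPsymm r hr) (hPidem r hr)
  have hle : ∀ r < q, ∀ v, ‖T r v‖ ≤ ‖v‖ := fun r hr => (hT r hr).norm_apply_le
  rw [opNorm, map_descProd]
  refine ContinuousLinearMap.opNorm_lt_one_of_norm_apply_lt _ fun v hv =>
    (norm_descProd_apply_le T hle v).lt_of_ne fun heq => hv ?_
  have hfix : ∀ r < q, T r v = v := apply_eq_self_of_norm_descProd_apply_eq T hle
    (fun r hr _ => (hT r hr).apply_eq_self_of_norm_apply_eq) heq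
  have hx : ∀ r < q, P r *ᵥ v.ofLp = v.ofLp := fun r hr => by
    simpa [T] using congrArg WithLp.ofLp (hfix r hr)
  simpa using congrArg (WithLp.toLp 2) (eq_zero_of_forall_mulVec_eq_self H P hsum hPrange hx)

/-- If `H 0, …, H (q-1)` are symmetric positive semidefinite real `N × N`
matrices whose sum is positive definite, and `P r` is the orthogonal projection onto
`ker (H r)` for each `r < q`, then `‖P (q-1) ⋯ P 1 * P 0‖ < 1`. -/
theorem opNorm_prod_proj_ker_lt_one
    (N q : ℕ) (H P : ℕ → Matrix (Fin N) (Fin N) ℝ)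
    (hH : ∀ r < q, (H r).PosSemidef)
    (hsum : (∑ r ∈ Finset.range q, H r).PosDef)
    (hPsymm : ∀ r < q, (P r)ᵀ = P r)
    (hPidem : ∀ r < q, P r * P r = P r)
    (hPrange : ∀ r < q, ∀ x : Fin N → ℝ, (H r).mulVec ((P r).mulVec x) = 0)
    (hPfix : ∀ r < q, ∀ x : Fin N → ℝ, (H r).mulVec x = 0 → (P r).mulVec x = x) :
    opNorm (descProd P 0 q) < 1 :=
  opNorm_prod_proj_ker_lt_one_general N q H P hsum hPsymm hPidem hPrange
end

section
/- Let H ∈ ℝ^{N×N} be symmetric with an orthonormal eigenbasis ξ_1, …, ξ_N of ℝ^N, where Hξ_p = 0 for p = 1, …, n₀ and Hξ_p = λ_p ξ_p with λ_p ≠ 0 for p = n₀+1, …, N. Set Q = [ξ_1 ⋯ ξ_{n₀}] ∈ ℝ^{N×n₀}, Γ = [ξ_{n₀+1} ⋯ ξ_N] ∈ ℝ^{N×(N−n₀)}, and let A, F ∈ ℝ^{n×n} be arbitrary. Let M = diag(A − λ_{n₀+1}F, …, A − λ_N F) be the block diagonal matrix in ℝ^{(N−n₀)n×(N−n₀)n}.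 Then for every t ∈ ℝ: exp(t(I_N ⊗ A − H ⊗ F)) = (QQᵀ) ⊗ e^{tA} + (Γ ⊗ I_n) e^{tM} (Γᵀ ⊗ I_n). -/
/-!
With `U` the matrix whose columns are the `ξ p`, orthonormality and the eigen-equations give
`H = U diag(λ) Uᵀ` with `U Uᵀ = 1`. Conjugating by `U ⊗ I_n` therefore turns `I_N ⊗ A - H ⊗ F`
into the block-diagonal matrix with blocks `A - λ_p F`, whose exponential is block diagonal with
blocks `e^{t(A - λ_p F)}`. Splitting the blocks into those with `λ_p = 0`, which are all `e^{tA}`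
and add up to `QQᵀ ⊗ e^{tA}`, and the remaining ones gives the two terms.
-/

open Matrix NormedSpace Kronecker

namespace Matrix

variable {m n o o₁ o₂ R 𝕜 : Type*}

section Kronecker

variable [DecidableEq o]

/-- `Matrix.blockDiagonal` with the block index as the first coordinate, the ordering in which
`1 ⊗ₖ A` is block diagonal. -/
def blockDiagonalFst [Zero R] (B : o → Matrix n n R) : Matrix (o × n) (o × n) R :=
  reindex (Equiv.prodComm n o) (Equiv.prodComm n o) (blockDiagonal B)

@[simp]
theorem blockDiagonalFst_apply [Zero R] (B : o → Matrix n n R) (p q : o) (i j : n) :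
    blockDiagonalFst B (p, i) (q, j) = if p = q then B p i j else 0 := by
  simp [blockDiagonalFst, blockDiagonal_apply]

theorem smul_blockDiagonalFst [Semiring R] (c : R) (B : o → Matrix n n R) :
    c • blockDiagonalFst B = blockDiagonalFst fun r => c • B r := by
  ext ⟨p, i⟩ ⟨q, j⟩
  by_cases hpq : p = q <;> simp [hpq]

theorem one_kronecker_sub_diagonal_kronecker [DecidableEq n] [CommRing R] (A F : Matrix n n R)
    (d : o → R) :
    (1 : Matrix o o R) ⊗ₖ A - diagonal d ⊗ₖ F = blockDiagonalFst fun r => A - d r • F := by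
  ext ⟨p, i⟩ ⟨q, j⟩
  by_cases hpq : p = q <;> simp [hpq, sub_eq_add_neg]

theorem kronecker_one_mul_blockDiagonalFst_mul_apply [Fintype n] [DecidableEq n] [Fintype o]
    [CommSemiring R] (U : Matrix m o R) (B : o → Matrix n n R) (W : Matrix o m R)
    (p q : m) (i j : n) :
    ((U ⊗ₖ (1 : Matrix n n R)) * blockDiagonalFst B * (W ⊗ₖ (1 : Matrix n n R))) (p, i) (q, j) =
      ∑ r, U p r * B r i j * W r q := by
  simp [mul_apply, Fintype.sum_prod_type, one_apply, ite_mul, mul_ite]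

theorem kronecker_one_mul_blockDiagonalFst_mul_eq_add [Fintype n] [DecidableEq n] [Fintype o]
    [Fintype o₁] [DecidableEq o₁] [Fintype o₂] [DecidableEq o₂] [CommSemiring R]
    (e : o₁ ⊕ o₂ ≃ o) (U : Matrix m o R) (B : o → Matrix n n R) (W : Matrix o m R) :
    (U ⊗ₖ (1 : Matrix n n R)) * blockDiagonalFst B * (W ⊗ₖ (1 : Matrix n n R)) =
      (U.submatrix id (e ∘ Sum.inl) ⊗ₖ (1 : Matrix n n R)) * blockDiagonalFst (B ∘ e ∘ Sum.inl) *
          (W.submatrix (e ∘ Sum.inl) id ⊗ₖ (1 : Matrix n n R)) +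
        (U.submatrix id (e ∘ Sum.inr) ⊗ₖ (1 : Matrix n n R)) * blockDiagonalFst (B ∘ e ∘ Sum.inr) *
          (W.submatrix (e ∘ Sum.inr) id ⊗ₖ (1 : Matrix n n R)) := by
  ext ⟨p, i⟩ ⟨q, j⟩
  simp only [add_apply, kronecker_one_mul_blockDiagonalFst_mul_apply, ← e.sum_comp,
    Fintype.sum_sum_type, submatrix_apply, Function.comp_apply, id]

theorem blockDiagonalFst_const [DecidableEq n] [MulZeroOneClass R] (C : Matrix n n R) :
    blockDiagonalFst (fun _ : o => C) = 1 ⊗ₖ C :=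
  (one_kronecker C).symm

theorem kronecker_one_mul_one_kronecker_mul_kronecker_one [DecidableEq n] [Fintype n] [Fintype o]
    [CommSemiring R] (U : Matrix m o R) (C : Matrix n n R) (W : Matrix o m R) :
    (U ⊗ₖ (1 : Matrix n n R)) * ((1 : Matrix o o R) ⊗ₖ C) * (W ⊗ₖ (1 : Matrix n n R)) =
      (U * W) ⊗ₖ C := by
  rw [← mul_kronecker_mul, ← mul_kronecker_mul, Matrix.mul_one, Matrix.one_mul, Matrix.mul_one]

theorem one_kronecker_sub_kronecker_conj [DecidableEq m] [Fintype n] [DecidableEq n] [Fintype o]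
    [CommRing R] {U : Matrix m o R} {V : Matrix o m R} (hUV : U * V = 1) (D : Matrix o o R)
    (A F : Matrix n n R) :
    (1 : Matrix m m R) ⊗ₖ A - (U * D * V) ⊗ₖ F =
      (U ⊗ₖ (1 : Matrix n n R)) * ((1 : Matrix o o R) ⊗ₖ A - D ⊗ₖ F) *
        (V ⊗ₖ (1 : Matrix n n R)) := by
  rw [Matrix.mul_sub, Matrix.sub_mul]
  simp only [← mul_kronecker_mul, Matrix.mul_one, Matrix.one_mul, hUV]

end Kronecker

section Orthonormal

variable [Fintype m] [DecidableEq m] [CommRing R] {ξ : m → m → R}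

theorem of_mul_transpose_of_eq_one (hortho : ∀ p q, ξ p ⬝ᵥ ξ q = if p = q then (1 : R) else 0) :
    of ξ * (of ξ)ᵀ = 1 := by
  ext p q
  simpa [mul_apply, one_apply, dotProduct] using hortho p q

theorem eq_transpose_of_mul_diagonal_mul_of
    (hortho : ∀ p q, ξ p ⬝ᵥ ξ q = if p = q then (1 : R) else 0) {H : Matrix m m R}
    {lam : m → R} (heig : ∀ p, H *ᵥ ξ p = lam p • ξ p) :
    H = (of ξ)ᵀ * diagonal lam * of ξ := by
  have hHU : H * (of ξ)ᵀ = (of ξ)ᵀ * diagonal lam := by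
    ext i q
    rw [mul_diagonal]
    simpa [mul_apply, mulVec, dotProduct, mul_comm] using congrFun (heig q) i
  rw [← hHU, Matrix.mul_assoc, mul_eq_one_comm.mp (of_mul_transpose_of_eq_one hortho),
    Matrix.mul_one]

end Orthonormal

section Exp

variable [Fintype m] [DecidableEq m] [Fintype n] [DecidableEq n] [Fintype o] [DecidableEq o]
  [RCLike 𝕜]

-- `exp` only depends on the topology; the operator norm makes the matrix algebras Banach algebras.
theorem exp_reindex (e : m ≃ o) (X : Matrix m m 𝕜) :
    exp (reindex e e X) = reindex e e (exp X) := by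
  open scoped Norms.Operator in
  exact (map_exp (reindexAlgEquiv ℚ 𝕜 e) (continuous_id.matrix_reindex e e) X).symm

theorem exp_blockDiagonalFst (B : o → Matrix n n 𝕜) :
    exp (blockDiagonalFst B) = blockDiagonalFst fun r => exp (B r) := by
  rw [blockDiagonalFst, exp_reindex, exp_blockDiagonal, blockDiagonalFst]
  congr 2
  open scoped Norms.Operator in
  exact @Pi.exp_def o (fun _ => Matrix n n 𝕜) _ _ _ (fun _ => inferInstance) B

theorem exp_conj_of_mul_eq_one {U V : Matrix m m 𝕜} (hUV : U * V = 1) (X : Matrix m m 𝕜) :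
    exp (U * X * V) = U * exp X * V :=
  exp_units_conj ⟨U, V, hUV, mul_eq_one_comm.mp hUV⟩ X

theorem exp_smul_one_kronecker_sub_kronecker_conj_diagonal {U V : Matrix m m 𝕜}
    (hUV : U * V = 1) (lam : m → 𝕜) (A F : Matrix n n 𝕜) (t : 𝕜) :
    exp (t • ((1 : Matrix m m 𝕜) ⊗ₖ A - (U * diagonal lam * V) ⊗ₖ F)) =
      (U ⊗ₖ (1 : Matrix n n 𝕜)) * blockDiagonalFst (fun r => exp (t • (A - lam r • F))) *
        (V ⊗ₖ (1 : Matrix n n 𝕜)) := by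
  have hUV₁ : (U ⊗ₖ (1 : Matrix n n 𝕜)) * (V ⊗ₖ 1) = 1 := by
    rw [← mul_kronecker_mul, hUV, Matrix.mul_one, one_kronecker_one]
  rw [one_kronecker_sub_kronecker_conj hUV, ← smul_mul_assoc, ← mul_smul_comm,
    exp_conj_of_mul_eq_one hUV₁, one_kronecker_sub_diagonal_kronecker, smul_blockDiagonalFst,
    exp_blockDiagonalFst]

end Exp

end Matrix

theorem exp_IkronA_sub_HkronF_eq_general
    (N n n₀ : ℕ) (hn₀ : n₀ ≤ N)
    (H : Matrix (Fin N) (Fin N) ℝ)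
    (ξ : Fin N → Fin N → ℝ)
    (hortho : ∀ p q : Fin N, ξ p ⬝ᵥ ξ q = if p = q then (1 : ℝ) else 0)
    (lam : Fin N → ℝ)
    (hlam0 : ∀ p : Fin N, (p : ℕ) < n₀ → lam p = 0)
    (heig : ∀ p : Fin N, H.mulVec (ξ p) = lam p • ξ p)
    (A F : Matrix (Fin n) (Fin n) ℝ)
    (Q : Matrix (Fin N) (Fin n₀) ℝ)
    (hQ : Q = Matrix.of fun i q => ξ (Fin.castLE hn₀ q) i)
    (Γ : Matrix (Fin N) (Fin (N - n₀)) ℝ)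
    (hΓ : Γ = Matrix.of fun i q =>
      ξ (Fin.cast (Nat.add_sub_cancel' hn₀) (Fin.natAdd n₀ q)) i)
    (M : Matrix (Fin (N - n₀) × Fin n) (Fin (N - n₀) × Fin n) ℝ)
    (hM : M = Matrix.of fun x y =>
      if x.1 = y.1 then
        (A - lam (Fin.cast (Nat.add_sub_cancel' hn₀) (Fin.natAdd n₀ x.1)) • F) x.2 y.2
      else 0) :
    ∀ t : ℝ,
      exp (t • ((1 : Matrix (Fin N) (Fin N) ℝ) ⊗ₖ A - H ⊗ₖ F)) =
        (Q * Qᵀ) ⊗ₖ exp (t • A) +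
          (Γ ⊗ₖ (1 : Matrix (Fin n) (Fin n) ℝ)) * exp (t • M) *
            (Γᵀ ⊗ₖ (1 : Matrix (Fin n) (Fin n) ℝ)) := by
  intro t
  set e : Fin n₀ ⊕ Fin (N - n₀) ≃ Fin N := finSumFinEquiv.trans (finCongr (Nat.add_sub_cancel' hn₀))
  have hQe : Q = (of ξ)ᵀ.submatrix id (e ∘ Sum.inl) := by rw [hQ]; rfl
  have hΓe : Γ = (of ξ)ᵀ.submatrix id (e ∘ Sum.inr) := by rw [hΓ]; rfl
  have hMe : M = blockDiagonalFst fun s => A - lam (e (Sum.inr s)) • F := by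
    ext ⟨p, i⟩ ⟨q, j⟩
    by_cases hpq : p = q <;> simp [hM, hpq, e]
  have hlam : ∀ r, lam (e (Sum.inl r)) = 0 := fun r => hlam0 _ r.isLt
  rw [eq_transpose_of_mul_diagonal_mul_of hortho heig,
    exp_smul_one_kronecker_sub_kronecker_conj_diagonal (mul_eq_one_comm.mp
      (of_mul_transpose_of_eq_one hortho)),
    kronecker_one_mul_blockDiagonalFst_mul_eq_add e, hMe, smul_blockDiagonalFst,
    exp_blockDiagonalFst, hQe, hΓe]
  simp only [Function.comp_def, hlam, zero_smul, sub_zero, blockDiagonalFst_const,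
    kronecker_one_mul_one_kronecker_mul_kronecker_one, transpose_submatrix, transpose_transpose]

/-- Spectral decomposition of the switched-system exponential: if `H` is
symmetric with orthonormal eigenbasis `ξ₁, …, ξ_N`, where the first `n₀` eigenvalues are
zero and the rest are nonzero, then
`exp(t(I_N ⊗ A − H ⊗ F)) = QQᵀ ⊗ e^{tA} + (Γ ⊗ I_n) e^{tM} (Γᵀ ⊗ I_n)` with
`M = diag(A − λ_{n₀+1}F, …, A − λ_N F)`. -/
theorem exp_IkronA_sub_HkronF_eq
    (N n n₀ : ℕ) (hn₀ : n₀ ≤ N)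
    (H : Matrix (Fin N) (Fin N) ℝ) (hH : H.IsSymm)
    (ξ : Fin N → Fin N → ℝ)
    (hortho : ∀ p q : Fin N, ξ p ⬝ᵥ ξ q = if p = q then (1 : ℝ) else 0)
    (lam : Fin N → ℝ)
    (hlam0 : ∀ p : Fin N, (p : ℕ) < n₀ → lam p = 0)
    (hlamne : ∀ p : Fin N, n₀ ≤ (p : ℕ) → lam p ≠ 0)
    (heig : ∀ p : Fin N, H.mulVec (ξ p) = lam p • ξ p)
    (A F : Matrix (Fin n) (Fin n) ℝ)
    (Q : Matrix (Fin N) (Fin n₀) ℝ)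
    (hQ : Q = Matrix.of fun i q => ξ (Fin.castLE hn₀ q) i)
    (Γ : Matrix (Fin N) (Fin (N - n₀)) ℝ)
    (hΓ : Γ = Matrix.of fun i q =>
      ξ (Fin.cast (Nat.add_sub_cancel' hn₀) (Fin.natAdd n₀ q)) i)
    (M : Matrix (Fin (N - n₀) × Fin n) (Fin (N - n₀) × Fin n) ℝ)
    (hM : M = Matrix.of fun x y =>
      if x.1 = y.1 then
        (A - lam (Fin.cast (Nat.add_sub_cancel' hn₀) (Fin.natAdd n₀ x.1)) • F) x.2 y.2
      else 0) :
    ∀ t : ℝ,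
      exp (t • ((1 : Matrix (Fin N) (Fin N) ℝ) ⊗ₖ A - H ⊗ₖ F)) =
        (Q * Qᵀ) ⊗ₖ exp (t • A) +
          (Γ ⊗ₖ (1 : Matrix (Fin n) (Fin n) ℝ)) * exp (t • M) *
            (Γᵀ ⊗ₖ (1 : Matrix (Fin n) (Fin n) ℝ)) :=
  exp_IkronA_sub_HkronF_eq_general N n n₀ hn₀ H ξ hortho lam hlam0 heig A F Q hQ Γ hΓ M hM
end

section
/- Let A ∈ ℝ^{n×n}, λ* ∈ ℝ, C_1 ≥ 1 with ‖e^{At}‖ ≤ C_1 e^{λ*t} for all t ≥ 0. Let (P_r)_{r∈ℕ} be matrices in ℝ^{N×N}, let 0 = t_0 < t_1 < ⋯ be real numbers with τ_r = t_{r+1} − t_r, and let 0 = j_0 < j_1 < ⋯ be indices such that for some 0 < δ < 1 and every k, ‖P_{j_{k+1}−1}⋯P_{j_k}‖ ≤ δ. Then for every positive integer ℓ and every k ≥ 0, the product of Kronecker-product factors satisfies ‖(P_{j_{k+ℓ}−1} ⊗ e^{Aτ_{j_{k+ℓ}−1}}) ⋯ (P_{j_k} ⊗ e^{Aτ_{j_k}})‖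 ≤ C_1 δ^ℓ e^{λ*(t_{j_{k+ℓ}} − t_{j_k})}; in particular, if λ* ≥ 0 and t_{j_{k+1}} − t_{j_k} ≤ T_c for all k, this is at most C_1 (δ e^{λ*T_c})^ℓ. -/
open Matrix NormedSpace Kronecker

/-!
Since the exponentials `e^{Aτ_r}` commute, the mixed-product rule collapses the product of the
Kronecker factors over `[a, b)` to `(P_{b-1} ⋯ P_a) ⊗ e^{A(t_b - t_a)}`. The Euclidean operator
norm is submultiplicative on Kronecker products: `M ⊗ N = (M ⊗ 1)(1 ⊗ N)`, where `M ⊗ 1` is block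
diagonal with blocks `M` and `1 ⊗ N` is a permuted block-diagonal matrix with blocks `N`. Over `ℓ`
consecutive blocks the `P`-part has norm at most `δ^ℓ` and the exponential at most
`C₁ e^{λ*(t_{j_{k+ℓ}} - t_{j_k})}`; for the second bound, `t_{j_{k+ℓ}} - t_{j_k} ≤ ℓ T_c`.
-/

section OpNorm

variable {ι κ : Type*} [Fintype ι] [Fintype κ]

lemma EuclideanSpace.norm_sq_eq_sum_norm_sq_slice (x : EuclideanSpace ℝ (ι × κ)) :
    ‖x‖ ^ 2 = ∑ k, ‖WithLp.toLp 2 (fun i => x (i, k))‖ ^ 2 := by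
  simp only [EuclideanSpace.norm_sq_eq, Fintype.sum_prod_type_right]

lemma Matrix.blockDiagonal_mulVec_apply [DecidableEq κ] {α : Type*}
    [NonUnitalNonAssocSemiring α] (M : κ → Matrix ι ι α) (x : ι × κ → α) (i : ι) (k : κ) :
    (blockDiagonal M *ᵥ x) (i, k) = (M k *ᵥ fun i' => x (i', k)) i := by
  simp only [mulVec, dotProduct, blockDiagonal_apply, Fintype.sum_prod_type, ite_mul, zero_mul,
    Finset.sum_ite_eq, Finset.mem_univ, if_true]

variable [DecidableEq ι] [DecidableEq κ]

lemma opNorm_nonneg (M : Matrix ι ι ℝ) : 0 ≤ opNorm M := norm_nonneg _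

lemma opNorm_one_le : opNorm (1 : Matrix ι ι ℝ) ≤ 1 := by
  rw [opNorm, map_one]
  exact ContinuousLinearMap.norm_id_le

lemma opNorm_mul_le (M M' : Matrix ι ι ℝ) : opNorm (M * M') ≤ opNorm M * opNorm M' := by
  rw [opNorm, map_mul]
  exact norm_mul_le _ _

lemma opNorm_reindex (e : ι ≃ κ) (M : Matrix ι ι ℝ) : opNorm (reindex e e M) = opNorm M := by
  let L := LinearIsometryEquiv.piLpCongrLeft 2 ℝ ℝ e
  have hconj : toEuclideanCLM (𝕜 := ℝ) (reindex e e M) =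
      (L : EuclideanSpace ℝ ι →L[ℝ] EuclideanSpace ℝ κ) ∘L toEuclideanCLM (𝕜 := ℝ) M ∘L
        (L.symm : EuclideanSpace ℝ κ →L[ℝ] EuclideanSpace ℝ ι) := by
    ext x i
    simp only [L, reindex_apply, ofLp_toEuclideanCLM, submatrix_mulVec_equiv, Equiv.symm_symm,
      Function.comp_apply, LinearIsometryEquiv.piLpCongrLeft_symm, ContinuousLinearMap.comp_apply,
      ContinuousLinearEquiv.coe_coe, LinearIsometryEquiv.coe_toContinuousLinearEquiv,
      LinearIsometryEquiv.piLpCongrLeft_apply, Equiv.piCongrLeft'_apply]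
    rfl
  rw [opNorm, opNorm, hconj, ContinuousLinearMap.opNorm_linearIsometryEquiv_comp,
    ContinuousLinearMap.opNorm_comp_linearIsometryEquiv]

lemma opNorm_blockDiagonal_le (M : κ → Matrix ι ι ℝ) {c : ℝ} (hc : 0 ≤ c)
    (hM : ∀ k, opNorm (M k) ≤ c) : opNorm (blockDiagonal M) ≤ c := by
  refine ContinuousLinearMap.opNorm_le_bound _ hc fun x => ?_
  let slice (k : κ) : EuclideanSpace ℝ ι := WithLp.toLp 2 fun i => x (i, k)
  have hslice (k : κ) :
      WithLp.toLp 2 (fun i => toEuclideanCLM (𝕜 := ℝ) (blockDiagonal M) x (i, k)) =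
        toEuclideanCLM (𝕜 := ℝ) (M k) (slice k) := by
    ext i
    simp [slice, blockDiagonal_mulVec_apply]
  refine (pow_le_pow_iff_left₀ (norm_nonneg _) (by positivity) two_ne_zero).1 ?_
  calc ‖toEuclideanCLM (𝕜 := ℝ) (blockDiagonal M) x‖ ^ 2
      = ∑ k, ‖toEuclideanCLM (𝕜 := ℝ) (M k) (slice k)‖ ^ 2 := by
        simp only [EuclideanSpace.norm_sq_eq_sum_norm_sq_slice, hslice]
    _ ≤ ∑ k, (c * ‖slice k‖) ^ 2 := by
        gcongr with k
        exact (toEuclideanCLM (𝕜 := ℝ) (M k)).le_of_opNorm_le (hM k) _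
    _ = (c * ‖x‖) ^ 2 := by
        simp only [mul_pow, ← Finset.mul_sum, EuclideanSpace.norm_sq_eq_sum_norm_sq_slice x]
        rfl

lemma opNorm_kronecker_one_le (M : Matrix ι ι ℝ) :
    opNorm (M ⊗ₖ (1 : Matrix κ κ ℝ)) ≤ opNorm M := by
  rw [kronecker_one]
  exact opNorm_blockDiagonal_le _ (opNorm_nonneg M) fun _ => le_rfl

lemma opNorm_one_kronecker_le (N : Matrix κ κ ℝ) :
    opNorm ((1 : Matrix ι ι ℝ) ⊗ₖ N) ≤ opNorm N := by
  rw [one_kronecker, opNorm_reindex]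
  exact opNorm_blockDiagonal_le _ (opNorm_nonneg N) fun _ => le_rfl

lemma opNorm_kronecker_le (M : Matrix ι ι ℝ) (N : Matrix κ κ ℝ) :
    opNorm (M ⊗ₖ N) ≤ opNorm M * opNorm N :=
  calc opNorm (M ⊗ₖ N) = opNorm ((M ⊗ₖ (1 : Matrix κ κ ℝ)) * ((1 : Matrix ι ι ℝ) ⊗ₖ N)) := by
        rw [← mul_kronecker_mul, mul_one, one_mul]
    _ ≤ opNorm (M ⊗ₖ (1 : Matrix κ κ ℝ)) * opNorm ((1 : Matrix ι ι ℝ) ⊗ₖ N) := opNorm_mul_le _ _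
    _ ≤ opNorm M * opNorm N :=
        mul_le_mul (opNorm_kronecker_one_le M) (opNorm_one_kronecker_le N)
          (opNorm_nonneg _) (opNorm_nonneg _)

end OpNorm

section DescProd

variable {R : Type*} [Monoid R]

@[simp]
lemma descProd_self (f : ℕ → R) (a : ℕ) : descProd f a a = 1 := by
  simp [descProd]

lemma descProd_succ (f : ℕ → R) {a b : ℕ} (h : a ≤ b) :
    descProd f a (b + 1) = f b * descProd f a b := by
  have hlen : b + 1 - a = (b - a) + 1 := by omega
  have hidx : (fun i => f (b + 1 - 1 - i)) ∘ Nat.succ = fun i => f (b - 1 - i) := by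
    funext i
    simp only [Function.comp_apply]
    congr 1
    omega
  rw [descProd, hlen, List.range_succ_eq_map, List.map_cons, List.prod_cons, List.map_map, hidx,
    Nat.add_sub_cancel, Nat.sub_zero, descProd]

lemma descProd_mul_descProd (f : ℕ → R) {a b c : ℕ} (hab : a ≤ b) (hbc : b ≤ c) :
    descProd f b c * descProd f a b = descProd f a c := by
  induction c, hbc using Nat.le_induction with
  | base => rw [descProd_self, one_mul]
  | succ c hbc ih => rw [descProd_succ f hbc, descProd_succ f (hab.trans hbc), mul_assoc, ih]

lemma descProd_kronecker {α m n : Type*} [CommSemiring α] [Fintype m] [DecidableEq m]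
    [Fintype n] [DecidableEq n] (f : ℕ → Matrix m m α) (g : ℕ → Matrix n n α) {a b : ℕ}
    (h : a ≤ b) : descProd (fun r => f r ⊗ₖ g r) a b = descProd f a b ⊗ₖ descProd g a b := by
  induction b, h using Nat.le_induction with
  | base => simp only [descProd_self, one_kronecker_one]
  | succ b hab ih =>
    rw [descProd_succ _ hab, descProd_succ _ hab, descProd_succ _ hab, ih, mul_kronecker_mul]

lemma descProd_exp_smul {m : Type*} [Fintype m] [DecidableEq m] (A : Matrix m m ℝ)
    (t : ℕ → ℝ) {a b : ℕ} (h : a ≤ b) :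
    descProd (fun r => exp ((t (r + 1) - t r) • A)) a b = exp ((t b - t a) • A) := by
  induction b, h using Nat.le_induction with
  | base => rw [descProd_self, sub_self, zero_smul, exp_zero]
  | succ b hab ih =>
    rw [descProd_succ _ hab, ih,
      ← exp_add_of_commute _ _ (((Commute.refl A).smul_left _).smul_right _), ← add_smul,
      sub_add_sub_cancel]

lemma opNorm_descProd_le_pow {ι : Type*} [Fintype ι] [DecidableEq ι] (P : ℕ → Matrix ι ι ℝ)
    {j : ℕ → ℕ} (hj : Monotone j) {δ : ℝ} (hblock : ∀ k, opNorm (descProd P (j k) (j (k + 1))) ≤ δ)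
    (ℓ k : ℕ) : opNorm (descProd P (j k) (j (k + ℓ))) ≤ δ ^ ℓ := by
  induction ℓ with
  | zero => simpa using opNorm_one_le
  | succ ℓ ih =>
    rw [← add_assoc, ← descProd_mul_descProd P (hj (k.le_add_right ℓ)) (hj (Nat.le_succ _)),
      pow_succ']
    exact (opNorm_mul_le _ _).trans <| mul_le_mul (hblock _) ih (opNorm_nonneg _)
      ((opNorm_nonneg _).trans (hblock 0))

end DescProd

lemma sub_le_nsmul_of_forall_succ_sub_le {α : Type*} [AddCommGroup α] [PartialOrder α]
    [IsOrderedAddMonoid α] {u : ℕ → α} {c : α} (h : ∀ k, u (k + 1) - u k ≤ c) (k ℓ : ℕ) :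
    u (k + ℓ) - u k ≤ ℓ • c := by
  induction ℓ with
  | zero => simp
  | succ ℓ ih =>
    rw [← add_assoc, succ_nsmul', ← sub_add_sub_cancel _ (u (k + ℓ))]
    exact add_le_add (h _) ih

theorem opNorm_kron_block_prod_le_general
    (n N : ℕ) (A : Matrix (Fin n) (Fin n) ℝ) (lamStar C1 : ℝ) (hC1 : 1 ≤ C1)
    (hA : ∀ t : ℝ, 0 ≤ t → opNorm (exp (t • A)) ≤ C1 * Real.exp (lamStar * t))
    (P : ℕ → Matrix (Fin N) (Fin N) ℝ)
    (ts : ℕ → ℝ) (htsmono : StrictMono ts)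
    (j : ℕ → ℕ) (hjmono : StrictMono j)
    (δ : ℝ) (hδ0 : 0 < δ)
    (hblock : ∀ k : ℕ, opNorm (descProd P (j k) (j (k + 1))) ≤ δ) :
    ∀ ℓ : ℕ, 0 < ℓ → ∀ k : ℕ,
      (opNorm (descProd
          (fun r => P r ⊗ₖ exp ((ts (r + 1) - ts r) • A)) (j k) (j (k + ℓ))) ≤
        C1 * δ ^ ℓ * Real.exp (lamStar * (ts (j (k + ℓ)) - ts (j k)))) ∧
      (0 ≤ lamStar → ∀ Tc : ℝ, (∀ k' : ℕ, ts (j (k' + 1)) - ts (j k') ≤ Tc) →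
        opNorm (descProd
          (fun r => P r ⊗ₖ exp ((ts (r + 1) - ts r) • A)) (j k) (j (k + ℓ))) ≤
        C1 * (δ * Real.exp (lamStar * Tc)) ^ ℓ) := by
  intro ℓ _ k
  have hjk : j k ≤ j (k + ℓ) := hjmono.monotone (k.le_add_right ℓ)
  have hΔ : 0 ≤ ts (j (k + ℓ)) - ts (j k) := sub_nonneg.2 (htsmono.monotone hjk)
  have hmain : opNorm (descProd
      (fun r => P r ⊗ₖ exp ((ts (r + 1) - ts r) • A)) (j k) (j (k + ℓ))) ≤
      C1 * δ ^ ℓ * Real.exp (lamStar * (ts (j (k + ℓ)) - ts (j k))) := by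
    rw [descProd_kronecker _ _ hjk, descProd_exp_smul A ts hjk]
    calc _ ≤ opNorm (descProd P (j k) (j (k + ℓ))) *
            opNorm (exp ((ts (j (k + ℓ)) - ts (j k)) • A)) := opNorm_kronecker_le _ _
      _ ≤ δ ^ ℓ * (C1 * Real.exp (lamStar * (ts (j (k + ℓ)) - ts (j k)))) :=
          mul_le_mul (opNorm_descProd_le_pow P hjmono.monotone hblock ℓ k) (hA _ hΔ)
            (opNorm_nonneg _) (pow_nonneg hδ0.le ℓ)
      _ = _ := by ring
  refine ⟨hmain, fun hlam Tc hTc => hmain.trans ?_⟩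
  have hduration : ts (j (k + ℓ)) - ts (j k) ≤ ℓ * Tc := by
    simpa only [nsmul_eq_mul, Function.comp_apply] using
      sub_le_nsmul_of_forall_succ_sub_le (u := ts ∘ j) hTc k ℓ
  calc C1 * δ ^ ℓ * Real.exp (lamStar * (ts (j (k + ℓ)) - ts (j k)))
      ≤ C1 * δ ^ ℓ * Real.exp (ℓ * (lamStar * Tc)) := by
        have hcoeff : 0 ≤ C1 * δ ^ ℓ :=
          mul_nonneg (zero_le_one.trans hC1) (pow_nonneg hδ0.le ℓ)
        gcongr C1 * δ ^ ℓ * Real.exp ?_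
        nlinarith
    _ = C1 * (δ * Real.exp (lamStar * Tc)) ^ ℓ := by rw [Real.exp_nat_mul, mul_pow, mul_assoc]

/-- Bound on products of Kronecker factors `P_r ⊗ e^{Aτ_r}` over `ℓ`
consecutive blocks, given `‖e^{At}‖ ≤ C₁e^{λ*t}` and block bounds
`‖P_{j_{k+1}-1}⋯P_{j_k}‖ ≤ δ`; in particular the bound `C₁(δe^{λ*T_c})^ℓ` when `λ* ≥ 0`
and the blocks have duration at most `T_c`. -/
theorem opNorm_kron_block_prod_le
    (n N : ℕ) (A : Matrix (Fin n) (Fin n) ℝ) (lamStar C1 : ℝ) (hC1 : 1 ≤ C1)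
    (hA : ∀ t : ℝ, 0 ≤ t → opNorm (exp (t • A)) ≤ C1 * Real.exp (lamStar * t))
    (P : ℕ → Matrix (Fin N) (Fin N) ℝ)
    (ts : ℕ → ℝ) (hts0 : ts 0 = 0) (htsmono : StrictMono ts)
    (j : ℕ → ℕ) (hj0 : j 0 = 0) (hjmono : StrictMono j)
    (δ : ℝ) (hδ0 : 0 < δ) (hδ1 : δ < 1)
    (hblock : ∀ k : ℕ, opNorm (descProd P (j k) (j (k + 1))) ≤ δ) :
    ∀ ℓ : ℕ, 0 < ℓ → ∀ k : ℕ,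
      (opNorm (descProd
          (fun r => P r ⊗ₖ exp ((ts (r + 1) - ts r) • A)) (j k) (j (k + ℓ))) ≤
        C1 * δ ^ ℓ * Real.exp (lamStar * (ts (j (k + ℓ)) - ts (j k)))) ∧
      (0 ≤ lamStar → ∀ Tc : ℝ, (∀ k' : ℕ, ts (j (k' + 1)) - ts (j k') ≤ Tc) →
        opNorm (descProd
          (fun r => P r ⊗ₖ exp ((ts (r + 1) - ts r) • A)) (j k) (j (k + ℓ))) ≤
        C1 * (δ * Real.exp (lamStar * Tc)) ^ ℓ) :=
  opNorm_kron_block_prod_le_general n N A lamStar C1 hC1 hA P ts htsmono j hjmono δ hδ0 hblock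
end
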